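/- If {ρ_{t,k}}_{0≤k≤K} solves Equation (2.1) on [0, T₁] for some T₁ > 0 (jointly continuous in (t,u), differentiable in t), then for all t ∈ [0, T₁], all 0 ≤ k ≤ K and all u ∈ 𝕋 one has 0 ≤ ρ_{t,k}(u) ≤ 1 and ∑_{k=0}^{K} ρ_{t,k}(u) = 1. (A priori bounds on solutions of Equation (2.1), established in the proof of Theorem 2.1.) -/

import Mathlib

open MeasureTheory Finset Filter
open Topology

noncomputable section

/-- The right-hand side of equation (2.1), with the conventions `ρ_{-1} ≡ 0`,
`ρ_{K+1} ≡ 0` and `φ_{K+1,l} ≡ 0`. Functions on the torus `𝕋 = ℝ/ℤ` are encoded as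
1-periodic functions on `ℝ`, and `∫_𝕋 · dv` as `∫ v in (0:ℝ)..1`. -/
def eqRHS (K : ℕ) (φ : ℕ → ℕ → ℝ → ℝ → ℝ) (ρ : ℕ → ℝ → ℝ) (k : ℕ) (u : ℝ) : ℝ :=
  -ρ k u * (∑ l ∈ Finset.range (K + 1), ∫ v in (0:ℝ)..1, φ k l u v * ρ l v)
    - ρ k u * (∑ l ∈ Finset.Icc 1 K, ∫ v in (0:ℝ)..1, φ l k v u * ρ l v)
    + (if k = 0 then 0 else
        ρ (k - 1) u * (∑ l ∈ Finset.Icc 1 K, ∫ v in (0:ℝ)..1, φ l (k - 1) v u * ρ l v))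
    + (if k < K then
        ρ (k + 1) u * (∑ l ∈ Finset.range (K + 1), ∫ v in (0:ℝ)..1, φ (k + 1) l u v * ρ l v)
      else 0)

/-- `ρ` is a solution of equation (2.1) on the time interval `I` (with `0 ∈ I`):
jointly continuous in `(t,u)`, 1-periodic in `u`, differentiable in `t` with
derivative given by the right-hand side of (2.1), and binomial initial condition. -/
structure IsSolution21 (K : ℕ) (φ : ℕ → ℕ → ℝ → ℝ → ℝ) (ψ : ℝ → ℝ)
    (I : Set ℝ) (ρ : ℝ → ℕ → ℝ → ℝ) : Prop where
  cont : ∀ k ≤ K, ContinuousOn (fun p : ℝ × ℝ => ρ p.1 k p.2) (I ×ˢ Set.univ)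
  periodic : ∀ t ∈ I, ∀ k ≤ K, Function.Periodic (ρ t k) 1
  hasDeriv : ∀ t ∈ I, ∀ k ≤ K, ∀ u : ℝ,
    HasDerivWithinAt (fun s => ρ s k u) (eqRHS K φ (ρ t) k u) I t
  init : ∀ k ≤ K, ∀ u : ℝ,
    ρ 0 k u = (K.choose k : ℝ) * (ψ u / K) ^ k * (1 - ψ u / K) ^ (K - k)

end
/-- The standing hypotheses on the data `K`, `φ`, `ψ` in the finite-`K` case:
`K ≥ 1`, the `φ_{k,l}` are smooth nonnegative 1-periodic functions with
`φ_{0,l} ≡ 0` and `φ_{k,K} ≡ 0`, and `ψ` is smooth, 1-periodic with `0 < ψ < K`. -/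
structure Hyp (K : ℕ) (φ : ℕ → ℕ → ℝ → ℝ → ℝ) (ψ : ℝ → ℝ) : Prop where
  hK : 1 ≤ K
  φ_smooth : ∀ k l, ContDiff ℝ (⊤ : ℕ∞) (fun p : ℝ × ℝ => φ k l p.1 p.2)
  φ_per₁ : ∀ k l v, Function.Periodic (fun u => φ k l u v) 1
  φ_per₂ : ∀ k l u, Function.Periodic (fun v => φ k l u v) 1
  φ_nonneg : ∀ k l u v, 0 ≤ φ k l u v
  φ_zero : ∀ l u v, φ 0 l u v = 0
  φ_top : ∀ k u v, φ k K u v = 0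
  ψ_smooth : ContDiff ℝ (⊤ : ℕ∞) ψ
  ψ_per : Function.Periodic ψ 1
  ψ_pos : ∀ u, 0 < ψ u
  ψ_lt : ∀ u, ψ u < K

private lemma aux_periodic_fract {f : ℝ → ℝ} (hf : Function.Periodic f 1) (u : ℝ) :
    f u = f (Int.fract u) := by
  have := hf.sub_int_mul_eq (x := u) ⌊u⌋
  rw [mul_one] at this
  rw [← this, Int.self_sub_floor]

private lemma aux_fract_mem (u : ℝ) : Int.fract u ∈ Set.Icc (0:ℝ) 1 :=
  ⟨Int.fract_nonneg u, (Int.fract_lt_one u).le⟩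

private lemma sum_eqRHS_zero (K : ℕ) (φ : ℕ → ℕ → ℝ → ℝ → ℝ) (r : ℕ → ℝ → ℝ)
    (φ0 : ∀ l u v, φ 0 l u v = 0) (φtop : ∀ k u v, φ k K u v = 0) (u : ℝ) :
    ∑ k ∈ Finset.range (K + 1), eqRHS K φ r k u = 0 := by
  set A : ℕ → ℝ := fun k =>
    r k u * (∑ l ∈ Finset.range (K + 1), ∫ v in (0:ℝ)..1, φ k l u v * r l v) with hA
  set T : ℕ → ℝ := fun k =>
    r k u * (∑ l ∈ Finset.Icc 1 K, ∫ v in (0:ℝ)..1, φ l k v u * r l v) with hT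
  have hpt : ∀ k, eqRHS K φ r k u
      = -A k - T k + (if k = 0 then 0 else T (k - 1)) + (if k < K then A (k + 1) else 0) := by
    intro k
    simp only [eqRHS, hA, hT, neg_mul]
  have hA0 : A 0 = 0 := by
    simp only [hA]
    have h : ∀ l ∈ Finset.range (K + 1), (∫ v in (0:ℝ)..1, φ 0 l u v * r l v) = 0 := by
      intro l _; simp [φ0]
    rw [Finset.sum_congr rfl h]; simp
  have hTK : T K = 0 := by
    simp only [hT]
    have h : ∀ l ∈ Finset.Icc 1 K, (∫ v in (0:ℝ)..1, φ l K v u * r l v) = 0 := by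
      intro l _; simp [φtop]
    rw [Finset.sum_congr rfl h]; simp
  have e0 : ∑ k ∈ Finset.range (K + 1), eqRHS K φ r k u
      = ∑ k ∈ Finset.range (K + 1), (-A k - T k)
        + ∑ k ∈ Finset.range (K + 1), (if k = 0 then 0 else T (k - 1))
        + ∑ k ∈ Finset.range (K + 1), (if k < K then A (k + 1) else 0) := by
    rw [← Finset.sum_add_distrib, ← Finset.sum_add_distrib]
    exact Finset.sum_congr rfl fun k _ => hpt k
  have e1 : ∑ k ∈ Finset.range (K + 1), (if k = 0 then 0 else T (k - 1))
      = ∑ k ∈ Finset.range K, T k := by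
    rw [Finset.sum_range_succ' (fun k => if k = 0 then (0:ℝ) else T (k - 1)) K]
    simp
  have e2 : ∑ k ∈ Finset.range (K + 1), (if k < K then A (k + 1) else 0)
      = ∑ k ∈ Finset.range K, A (k + 1) := by
    rw [Finset.sum_range_succ (fun k => if k < K then A (k + 1) else (0:ℝ)) K]
    simp only [lt_irrefl, if_neg, add_zero, if_false]
    exact Finset.sum_congr rfl fun k hk => if_pos (Finset.mem_range.mp hk)
  have e3 : ∑ k ∈ Finset.range (K + 1), (-A k - T k)
      = -(∑ k ∈ Finset.range K, A (k + 1) + A 0) - (∑ k ∈ Finset.range K, T k + T K) := by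
    rw [Finset.sum_sub_distrib, Finset.sum_neg_distrib,
      Finset.sum_range_succ' A K, Finset.sum_range_succ T K]
  rw [e0, e1, e2, e3, hA0, hTK]
  ring

set_option maxHeartbeats 1000000 in
/-- **A priori bounds** (from the proof of Theorem 2.1): any solution of equation
(2.1) on `[0, T₁]` takes values in `[0,1]` and sums to `1` over `k = 0, …, K`. -/
theorem apriori_bounds_eq21 (K : ℕ) (φ : ℕ → ℕ → ℝ → ℝ → ℝ) (ψ : ℝ → ℝ)
    (h : Hyp K φ ψ) (T₁ : ℝ) (hT₁ : 0 < T₁) (ρ : ℝ → ℕ → ℝ → ℝ)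
    (hρ : IsSolution21 K φ ψ (Set.Icc 0 T₁) ρ) :
    ∀ t ∈ Set.Icc (0:ℝ) T₁, ∀ u : ℝ,
      (∀ k ≤ K, 0 ≤ ρ t k u ∧ ρ t k u ≤ 1) ∧
        ∑ k ∈ Finset.range (K + 1), ρ t k u = 1 := by
  obtain ⟨hK, φsm, φp1, φp2, φnn, φ0, φtop, _, _, ψpos, ψlt⟩ := h
  obtain ⟨cont, per, hderiv, init⟩ := hρ
  have hKpos : (0:ℝ) < K := by exact_mod_cast hK
  -- continuity of `ρ t k` in the space variable
  have hcu : ∀ t ∈ Set.Icc (0:ℝ) T₁, ∀ k, k ≤ K → Continuous (ρ t k) := by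
    intro t ht k hk
    rw [← continuousOn_univ]
    exact (cont k hk).comp ((continuous_const.prodMk continuous_id).continuousOn)
      (fun v _ => ⟨ht, trivial⟩)
  -- uniform bound on ρ
  have hBk : ∀ k, ∃ C : ℝ, ∀ t ∈ Set.Icc (0:ℝ) T₁, ∀ u : ℝ, k ≤ K → |ρ t k u| ≤ C := by
    intro k
    by_cases hk : k ≤ K
    · obtain ⟨C, hC⟩ := (isCompact_Icc.prod isCompact_Icc).exists_bound_of_continuousOn
        ((cont k hk).mono (fun p hp => ⟨hp.1, trivial⟩))
      refine ⟨C, fun t ht u _ => ?_⟩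
      have h1 : ρ t k u = ρ t k (Int.fract u) := aux_periodic_fract (per t ht k hk) u
      have h2 := hC (t, Int.fract u) ⟨ht, aux_fract_mem u⟩
      rw [h1]; exact h2
    · exact ⟨0, fun _ _ _ hk' => absurd hk' hk⟩
  choose Bf hBf using hBk
  set B : ℝ := ∑ k ∈ Finset.range (K + 1), |Bf k| with hBdef
  have hBnn : 0 ≤ B := Finset.sum_nonneg fun _ _ => abs_nonneg _
  have hB : ∀ t ∈ Set.Icc (0:ℝ) T₁, ∀ k, k ≤ K → ∀ u : ℝ, |ρ t k u| ≤ B := by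
    intro t ht k hk u
    calc |ρ t k u| ≤ Bf k := hBf k t ht u hk
      _ ≤ |Bf k| := le_abs_self _
      _ ≤ B := Finset.single_le_sum (f := fun j => |Bf j|) (fun _ _ => abs_nonneg _)
          (Finset.mem_range.mpr (by omega))
  -- uniform bound on φ
  have hFkl : ∀ k l : ℕ, ∃ D : ℝ, ∀ u v : ℝ, |φ k l u v| ≤ D := by
    intro k l
    obtain ⟨D, hD⟩ := (isCompact_Icc.prod isCompact_Icc).exists_bound_of_continuousOn
      ((φsm k l).continuous.continuousOn)
    refine ⟨D, fun u v => ?_⟩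
    have h1 : φ k l u v = φ k l (Int.fract u) (Int.fract v) := by
      rw [aux_periodic_fract (φp1 k l v) u]
      exact aux_periodic_fract (φp2 k l (Int.fract u)) v
    rw [h1]
    exact hD (Int.fract u, Int.fract v) ⟨aux_fract_mem u, aux_fract_mem v⟩
  choose Df hDf using hFkl
  set F : ℝ := ∑ k ∈ Finset.range (K + 1), ∑ l ∈ Finset.range (K + 1), |Df k l| with hFdef
  have hFnn : 0 ≤ F :=
    Finset.sum_nonneg fun _ _ => Finset.sum_nonneg fun _ _ => abs_nonneg _
  have hF : ∀ k l : ℕ, k ≤ K → l ≤ K → ∀ u v : ℝ, |φ k l u v| ≤ F := by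
    intro k l hk hl u v
    calc |φ k l u v| ≤ Df k l := hDf k l u v
      _ ≤ |Df k l| := le_abs_self _
      _ ≤ ∑ j ∈ Finset.range (K + 1), |Df k j| := Finset.single_le_sum
          (f := fun j => |Df k j|) (fun _ _ => abs_nonneg _) (Finset.mem_range.mpr (by omega))
      _ ≤ F := Finset.single_le_sum
          (f := fun i => ∑ j ∈ Finset.range (K + 1), |Df i j|)
          (fun _ _ => Finset.sum_nonneg fun _ _ => abs_nonneg _)
          (Finset.mem_range.mpr (by omega))
  -- integrability
  have hint1 : ∀ t ∈ Set.Icc (0:ℝ) T₁, ∀ k l, l ≤ K → ∀ u : ℝ,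
      IntervalIntegrable (fun v => φ k l u v * ρ t l v) volume 0 1 := by
    intro t ht k l hl u
    exact (((φsm k l).continuous.comp (Continuous.prodMk_right u)).mul (hcu t ht l hl)).intervalIntegrable 0 1
  have hint2 : ∀ t ∈ Set.Icc (0:ℝ) T₁, ∀ k l, l ≤ K → ∀ u : ℝ,
      IntervalIntegrable (fun v => φ l k v u * ρ t l v) volume 0 1 := by
    intro t ht k l hl u
    exact (((φsm l k).continuous.comp (continuous_id.prodMk continuous_const)).mul
      (hcu t ht l hl)).intervalIntegrable 0 1
  -- bound on the integrals
  have hIbd1 : ∀ t ∈ Set.Icc (0:ℝ) T₁, ∀ k l, k ≤ K → l ≤ K → ∀ u : ℝ,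
      |∫ v in (0:ℝ)..1, φ k l u v * ρ t l v| ≤ F * B := by
    intro t ht k l hk hl u
    have := intervalIntegral.norm_integral_le_of_norm_le_const
      (f := fun v => φ k l u v * ρ t l v) (C := F * B) (a := 0) (b := 1) ?_
    · simpa using this
    · intro v _
      rw [Real.norm_eq_abs, abs_mul]
      exact mul_le_mul (hF k l hk hl u v) (hB t ht l hl v) (abs_nonneg _) hFnn
  have hIbd2 : ∀ t ∈ Set.Icc (0:ℝ) T₁, ∀ k l, k ≤ K → l ≤ K → ∀ u : ℝ,
      |∫ v in (0:ℝ)..1, φ l k v u * ρ t l v| ≤ F * B := by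
    intro t ht k l hk hl u
    have := intervalIntegral.norm_integral_le_of_norm_le_const
      (f := fun v => φ l k v u * ρ t l v) (C := F * B) (a := 0) (b := 1) ?_
    · simpa using this
    · intro v _
      rw [Real.norm_eq_abs, abs_mul]
      exact mul_le_mul (hF l k hl hk v u) (hB t ht l hl v) (abs_nonneg _) hFnn
  -- bounds on the sums of integrals
  have hSbd1 : ∀ t ∈ Set.Icc (0:ℝ) T₁, ∀ k, k ≤ K → ∀ u : ℝ,
      |∑ l ∈ Finset.range (K + 1), ∫ v in (0:ℝ)..1, φ k l u v * ρ t l v|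
        ≤ (K + 1) * (F * B) := by
    intro t ht k hk u
    calc |∑ l ∈ Finset.range (K + 1), ∫ v in (0:ℝ)..1, φ k l u v * ρ t l v|
        ≤ ∑ l ∈ Finset.range (K + 1), |∫ v in (0:ℝ)..1, φ k l u v * ρ t l v| :=
          Finset.abs_sum_le_sum_abs _ _
      _ ≤ ∑ l ∈ Finset.range (K + 1), (F * B) := Finset.sum_le_sum
          (fun l hl => hIbd1 t ht k l hk (by simpa using Nat.lt_succ_iff.mp (Finset.mem_range.mp hl)) u)
      _ = (K + 1) * (F * B) := by
          rw [Finset.sum_const, Finset.card_range, nsmul_eq_mul]; push_cast; ring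
  have hSbd2 : ∀ t ∈ Set.Icc (0:ℝ) T₁, ∀ k, k ≤ K → ∀ u : ℝ,
      |∑ l ∈ Finset.Icc 1 K, ∫ v in (0:ℝ)..1, φ l k v u * ρ t l v|
        ≤ (K + 1) * (F * B) := by
    intro t ht k hk u
    calc |∑ l ∈ Finset.Icc 1 K, ∫ v in (0:ℝ)..1, φ l k v u * ρ t l v|
        ≤ ∑ l ∈ Finset.Icc 1 K, |∫ v in (0:ℝ)..1, φ l k v u * ρ t l v| :=
          Finset.abs_sum_le_sum_abs _ _
      _ ≤ ∑ l ∈ Finset.Icc 1 K, (F * B) := Finset.sum_le_sum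
          (fun l hl => hIbd2 t ht k l hk (Finset.mem_Icc.mp hl).2 u)
      _ = K * (F * B) := by
          rw [Finset.sum_const, Nat.card_Icc, nsmul_eq_mul]; push_cast; ring
      _ ≤ (K + 1) * (F * B) := by nlinarith [mul_nonneg hFnn hBnn]
  -- the constants
  set C : ℝ := 6 * (K + 1) * F * B with hCdef
  set L : ℝ := C + 1 with hLdef
  have hCnn : 0 ≤ C := by positivity
  have hLpos : 0 < L := by positivity
  -- the key barrier estimate
  have key : ∀ ε : ℝ, 0 < ε → ∀ t ∈ Set.Icc (0:ℝ) T₁, ∀ k, k ≤ K → ∀ u : ℝ,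
      -(ε * Real.exp (L * t)) < ρ t k u := by
    intro ε hε
    by_contra hcon
    push_neg at hcon
    obtain ⟨t₀, ht₀, k₀, hk₀, u₀, hu₀⟩ := hcon
    -- the compact "bad" set
    set G : ℕ → ℝ × ℝ → ℝ := fun k p => ρ p.1 k p.2 + ε * Real.exp (L * p.1) with hG
    set Sk : ℕ → Set ℝ := fun k =>
      Prod.fst '' ((Set.Icc (0:ℝ) T₁ ×ˢ Set.Icc (0:ℝ) 1) ∩ (G k) ⁻¹' Set.Iic 0) with hSk
    have hSkcpt : ∀ k, k ≤ K → IsCompact (Sk k) := by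
      intro k hk
      apply IsCompact.image _ continuous_fst
      apply (isCompact_Icc.prod isCompact_Icc).of_isClosed_subset
      · apply ContinuousOn.preimage_isClosed_of_isClosed
        · exact ((cont k hk).mono (fun p hp => ⟨hp.1, trivial⟩)).add
            (Continuous.continuousOn (continuous_const.mul
              (Real.continuous_exp.comp (continuous_const.mul continuous_fst))))
        · exact isClosed_Icc.prod isClosed_Icc
        · exact isClosed_Iic
      · exact Set.inter_subset_left
    have hSksub : ∀ k, Sk k ⊆ Set.Icc 0 T₁ := by
      intro k s hs
      obtain ⟨p, hp, hps⟩ := hs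
      exact hps ▸ hp.1.1
    set S : Set ℝ := ⋃ k ∈ Finset.range (K + 1), Sk k with hS
    have hScpt : IsCompact S := (Finset.range (K + 1)).isCompact_biUnion
      (fun k hk => hSkcpt k (Nat.lt_succ_iff.mp (Finset.mem_range.mp hk)))
    have hSne : S.Nonempty := by
      refine ⟨t₀, Set.mem_biUnion (Finset.mem_range.mpr (Nat.lt_succ_of_le hk₀)) ?_⟩
      refine ⟨(t₀, Int.fract u₀), ⟨⟨ht₀, aux_fract_mem u₀⟩, ?_⟩, rfl⟩
      simp only [hG, Set.mem_preimage, Set.mem_Iic]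
      rw [← aux_periodic_fract (per t₀ ht₀ k₀ hk₀) u₀]
      linarith
    set τ := sInf S with hτdef
    have hτS : τ ∈ S := hScpt.sInf_mem hSne
    have hSsub : S ⊆ Set.Icc 0 T₁ := by
      intro s hs
      simp only [hS, Set.mem_iUnion, exists_prop] at hs
      obtain ⟨k, _, hk⟩ := hs
      exact hSksub k hk
    have hτI : τ ∈ Set.Icc (0:ℝ) T₁ := hSsub hτS
    have hτS' := hτS
    simp only [hS, Set.mem_iUnion, exists_prop] at hτS'
    obtain ⟨k₁, hk₁mem, hτSk⟩ := hτS'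
    have hk₁K : k₁ ≤ K := Nat.lt_succ_iff.mp (Finset.mem_range.mp hk₁mem)
    obtain ⟨p, ⟨⟨hpI, hpu⟩, hple⟩, hpfst⟩ := hτSk
    set u₁ := p.2 with hu₁def
    have hple' : ρ τ k₁ u₁ + ε * Real.exp (L * τ) ≤ 0 := by
      simp only [hG, Set.mem_preimage, Set.mem_Iic] at hple
      rw [← hpfst]
      exact hple
    have hτlb : ∀ s ∈ S, τ ≤ s := fun s hs => csInf_le hScpt.bddBelow hs
    have hbefore : ∀ s, 0 ≤ s → s < τ → ∀ l, l ≤ K → ∀ v : ℝ,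
        -(ε * Real.exp (L * s)) < ρ s l v := by
      intro s hs0 hsτ l hl v
      by_contra hc2
      push_neg at hc2
      have hsI : s ∈ Set.Icc (0:ℝ) T₁ := ⟨hs0, hsτ.le.trans hτI.2⟩
      have hmem : s ∈ S := by
        apply Set.mem_biUnion (Finset.mem_range.mpr (Nat.lt_succ_of_le hl))
        refine ⟨(s, Int.fract v), ⟨⟨hsI, aux_fract_mem v⟩, ?_⟩, rfl⟩
        simp only [hG, Set.mem_preimage, Set.mem_Iic]
        rw [← aux_periodic_fract (per s hsI l hl) v]
        linarith
      exact absurd (hτlb s hmem) (not_le.mpr hsτ)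
    have hτpos : 0 < τ := by
      rcases hτI.1.lt_or_eq with h' | h'
      · exact h'
      · exfalso
        have hnn : 0 ≤ ρ 0 k₁ u₁ := by
          rw [init k₁ hk₁K u₁]
          have h1 : 0 ≤ ψ u₁ / K := div_nonneg (ψpos u₁).le hKpos.le
          have h2 : 0 ≤ 1 - ψ u₁ / K := by
            rw [sub_nonneg, div_le_one hKpos]
            exact (ψlt u₁).le
          positivity
        have hnn' : 0 ≤ ρ τ k₁ u₁ := by rw [← h']; exact hnn
        have hexp0 : (0:ℝ) < ε * Real.exp (L * τ) := mul_pos hε (Real.exp_pos _)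
        linarith
    -- at τ, all values are still above the barrier (by continuity from the left)
    have hatτ : ∀ l, l ≤ K → ∀ v : ℝ, -(ε * Real.exp (L * τ)) ≤ ρ τ l v := by
      intro l hl v
      have hcw : ContinuousWithinAt (fun s => ρ s l v + ε * Real.exp (L * s))
          (Set.Icc 0 T₁) τ :=
        (hderiv τ hτI l hl v).continuousWithinAt.add (Continuous.continuousWithinAt
          (continuous_const.mul (Real.continuous_exp.comp (continuous_const.mul continuous_id))))
      haveI hne : (𝓝[Set.Ico (0:ℝ) τ] τ).NeBot := right_nhdsWithin_Ico_neBot hτpos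
      have hmono : 𝓝[Set.Ico (0:ℝ) τ] τ ≤ 𝓝[Set.Icc (0:ℝ) T₁] τ :=
        nhdsWithin_mono _ (fun x hx => ⟨hx.1, hx.2.le.trans hτI.2⟩)
      have htend := hcw.tendsto.mono_left hmono
      have hge : 0 ≤ ρ τ l v + ε * Real.exp (L * τ) := by
        refine ge_of_tendsto htend ?_
        filter_upwards [self_mem_nhdsWithin] with s hs
        have := hbefore s hs.1 hs.2 l hl v
        linarith
      linarith
    have heq : ρ τ k₁ u₁ = -(ε * Real.exp (L * τ)) :=
      le_antisymm (by linarith) (hatτ k₁ hk₁K u₁)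
    -- the derivative of the barrier function at τ is nonpositive
    have hexpd : HasDerivAt (fun s : ℝ => ε * Real.exp (L * s))
        (ε * (Real.exp (L * τ) * L)) τ := by
      have h1 : HasDerivAt (fun s : ℝ => L * s) L τ := by
        simpa using HasDerivAt.const_mul L (hasDerivAt_id τ)
      exact HasDerivAt.const_mul ε h1.exp
    have hg : HasDerivWithinAt (fun s => ρ s k₁ u₁ + ε * Real.exp (L * s))
        (eqRHS K φ (ρ τ) k₁ u₁ + ε * (Real.exp (L * τ) * L)) (Set.Icc 0 T₁) τ :=
      (hderiv τ hτI k₁ hk₁K u₁).add hexpd.hasDerivWithinAt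
    have hd : eqRHS K φ (ρ τ) k₁ u₁ + ε * (Real.exp (L * τ) * L) ≤ 0 := by
      have hg2 := hg.mono (Set.Icc_subset_Icc_right hτI.2)
      rw [hasDerivWithinAt_iff_tendsto_slope] at hg2
      haveI hne : (𝓝[Set.Icc (0:ℝ) τ \ {τ}] τ).NeBot := by
        rw [Set.Icc_sdiff_right]
        exact right_nhdsWithin_Ico_neBot hτpos
      refine le_of_tendsto hg2 ?_
      filter_upwards [self_mem_nhdsWithin] with s hs
      rw [Set.Icc_sdiff_right] at hs
      have hnum : 0 ≤ (ρ s k₁ u₁ + ε * Real.exp (L * s))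
          - (ρ τ k₁ u₁ + ε * Real.exp (L * τ)) := by
        have h1 := hbefore s hs.1 hs.2 k₁ hk₁K u₁
        rw [heq]
        linarith
      rw [slope_def_field]
      exact div_nonpos_of_nonneg_of_nonpos hnum (by linarith [hs.2])
    set m := ε * Real.exp (L * τ) with hmdef
    have hmpos : 0 < m := mul_pos hε (Real.exp_pos _)
    have hA1 : (0:ℝ) ≤ (K + 1) * (F * m) :=
      mul_nonneg (by positivity) (mul_nonneg hFnn hmpos.le)
    have hA2 : (0:ℝ) ≤ (K + 1) * (F * B) :=
      mul_nonneg (by positivity) (mul_nonneg hFnn hBnn)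
    -- lower bounds on the integrals at time τ
    have hIlow1 : ∀ k l, k ≤ K → l ≤ K → ∀ u : ℝ,
        -(F * m) ≤ ∫ v in (0:ℝ)..1, φ k l u v * ρ τ l v := by
      intro k l hk hl u
      have hc : (∫ _ in (0:ℝ)..1, (-(F * m) : ℝ)) = -(F * m) := by simp
      rw [← hc]
      apply intervalIntegral.integral_mono_on zero_le_one intervalIntegrable_const
        (hint1 τ hτI k l hl u)
      intro v _
      have h1 := hatτ l hl v
      have h2 := φnn k l u v
      have h3 : φ k l u v ≤ F := (abs_le.mp (hF k l hk hl u v)).2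
      nlinarith [mul_nonneg h2 (by linarith : (0:ℝ) ≤ ρ τ l v + m),
        mul_nonneg (by linarith : (0:ℝ) ≤ F - φ k l u v) hmpos.le]
    have hIlow2 : ∀ k l, k ≤ K → l ≤ K → ∀ u : ℝ,
        -(F * m) ≤ ∫ v in (0:ℝ)..1, φ l k v u * ρ τ l v := by
      intro k l hk hl u
      have hc : (∫ _ in (0:ℝ)..1, (-(F * m) : ℝ)) = -(F * m) := by simp
      rw [← hc]
      apply intervalIntegral.integral_mono_on zero_le_one intervalIntegrable_const
        (hint2 τ hτI k l hl u)
      intro v _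
      have h1 := hatτ l hl v
      have h2 := φnn l k v u
      have h3 : φ l k v u ≤ F := (abs_le.mp (hF l k hl hk v u)).2
      nlinarith [mul_nonneg h2 (by linarith : (0:ℝ) ≤ ρ τ l v + m),
        mul_nonneg (by linarith : (0:ℝ) ≤ F - φ l k v u) hmpos.le]
    have hSlow1 : ∀ k, k ≤ K → ∀ u : ℝ,
        -((K + 1) * (F * m)) ≤ ∑ l ∈ Finset.range (K + 1),
          ∫ v in (0:ℝ)..1, φ k l u v * ρ τ l v := by
      intro k hk u
      calc -((K + 1 : ℝ) * (F * m)) = ∑ _l ∈ Finset.range (K + 1), (-(F * m)) := by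
            rw [Finset.sum_const, Finset.card_range, nsmul_eq_mul]; push_cast; ring
        _ ≤ _ := Finset.sum_le_sum
            (fun l hl => hIlow1 k l hk (Nat.lt_succ_iff.mp (Finset.mem_range.mp hl)) u)
    have hSlow2 : ∀ k, k ≤ K → ∀ u : ℝ,
        -((K + 1) * (F * m)) ≤ ∑ l ∈ Finset.Icc 1 K,
          ∫ v in (0:ℝ)..1, φ l k v u * ρ τ l v := by
      intro k hk u
      have h1 : ∑ _l ∈ Finset.Icc 1 K, (-(F * m) : ℝ)
          ≤ ∑ l ∈ Finset.Icc 1 K, ∫ v in (0:ℝ)..1, φ l k v u * ρ τ l v :=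
        Finset.sum_le_sum (fun l hl => hIlow2 k l hk (Finset.mem_Icc.mp hl).2 u)
      have h2 : ∑ _l ∈ Finset.Icc 1 K, (-(F * m) : ℝ) = -(K * (F * m)) := by
        rw [Finset.sum_const, Nat.card_Icc, nsmul_eq_mul]; push_cast; ring
      have h3 : (0:ℝ) ≤ F * m := mul_nonneg hFnn hmpos.le
      nlinarith
    -- product lower bound helper
    have hprod : ∀ x y a b : ℝ, -m ≤ x → x ≤ B → -a ≤ y → y ≤ b → 0 ≤ a → 0 ≤ b →
        -(m * b + B * a) ≤ x * y := by
      intro x y a b h1 h2 h3 h4 ha hb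
      rcases le_or_gt 0 y with hy | hy
      · nlinarith [mul_nonneg (by linarith : (0:ℝ) ≤ x + m) hy,
          mul_nonneg hmpos.le (by linarith : (0:ℝ) ≤ b - y), mul_nonneg hBnn ha]
      · nlinarith [mul_nonneg (by linarith : (0:ℝ) ≤ B - x) (by linarith : (0:ℝ) ≤ -y),
          mul_nonneg hBnn (by linarith : (0:ℝ) ≤ y + a), mul_nonneg hmpos.le hb]
    have hρval : ∀ l, l ≤ K → ∀ v : ℝ, -m ≤ ρ τ l v ∧ ρ τ l v ≤ B := fun l hl v =>
      ⟨hatτ l hl v, (abs_le.mp (hB τ hτI l hl v)).2⟩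
    -- main estimate: eqRHS ≥ -C·m at the critical point
    have hmain : -(C * m) ≤ eqRHS K φ (ρ τ) k₁ u₁ := by
      rw [eqRHS]
      have h1 := abs_le.mp (hSbd1 τ hτI k₁ hk₁K u₁)
      have h2 := abs_le.mp (hSbd2 τ hτI k₁ hk₁K u₁)
      have hT12 : -(2 * ((K + 1) * (F * B)) * m)
          ≤ -ρ τ k₁ u₁ * (∑ l ∈ Finset.range (K + 1), ∫ v in (0:ℝ)..1, φ k₁ l u₁ v * ρ τ l v)
            - ρ τ k₁ u₁ * (∑ l ∈ Finset.Icc 1 K, ∫ v in (0:ℝ)..1, φ l k₁ v u₁ * ρ τ l v) := by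
        have e : -ρ τ k₁ u₁ * (∑ l ∈ Finset.range (K + 1), ∫ v in (0:ℝ)..1, φ k₁ l u₁ v * ρ τ l v)
            - ρ τ k₁ u₁ * (∑ l ∈ Finset.Icc 1 K, ∫ v in (0:ℝ)..1, φ l k₁ v u₁ * ρ τ l v)
            = m * ((∑ l ∈ Finset.range (K + 1), ∫ v in (0:ℝ)..1, φ k₁ l u₁ v * ρ τ l v)
              + (∑ l ∈ Finset.Icc 1 K, ∫ v in (0:ℝ)..1, φ l k₁ v u₁ * ρ τ l v)) := by
          rw [heq]; ring
        rw [e]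
        nlinarith [mul_nonneg hmpos.le (by linarith :
          (0:ℝ) ≤ (∑ l ∈ Finset.range (K + 1), ∫ v in (0:ℝ)..1, φ k₁ l u₁ v * ρ τ l v)
            + (∑ l ∈ Finset.Icc 1 K, ∫ v in (0:ℝ)..1, φ l k₁ v u₁ * ρ τ l v)
            + 2 * ((K + 1) * (F * B)))]
      have hFBm : (0:ℝ) ≤ (K + 1) * (F * B) * m := mul_nonneg hA2 hmpos.le
      have hT3 : -(2 * ((K + 1) * (F * B)) * m)
          ≤ (if k₁ = 0 then (0:ℝ) else ρ τ (k₁ - 1) u₁ *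
            (∑ l ∈ Finset.Icc 1 K, ∫ v in (0:ℝ)..1, φ l (k₁ - 1) v u₁ * ρ τ l v)) := by
        split_ifs with hk0
        · nlinarith
        · have hk1K : k₁ - 1 ≤ K := by omega
          have hx := hρval (k₁ - 1) hk1K u₁
          have hylow := hSlow2 (k₁ - 1) hk1K u₁
          have hyup := (abs_le.mp (hSbd2 τ hτI (k₁ - 1) hk1K u₁)).2
          have hp := hprod _ _ ((K + 1) * (F * m)) ((K + 1) * (F * B)) hx.1 hx.2
            (by linarith [hylow] : -((K + 1) * (F * m)) ≤ _) hyup hA1 hA2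
          nlinarith
      have hT4 : -(2 * ((K + 1) * (F * B)) * m)
          ≤ (if k₁ < K then ρ τ (k₁ + 1) u₁ *
            (∑ l ∈ Finset.range (K + 1), ∫ v in (0:ℝ)..1, φ (k₁ + 1) l u₁ v * ρ τ l v)
            else (0:ℝ)) := by
        split_ifs with hkK
        · have hk1K : k₁ + 1 ≤ K := hkK
          have hx := hρval (k₁ + 1) hk1K u₁
          have hylow := hSlow1 (k₁ + 1) hk1K u₁
          have hyup := (abs_le.mp (hSbd1 τ hτI (k₁ + 1) hk1K u₁)).2
          have hp := hprod _ _ ((K + 1) * (F * m)) ((K + 1) * (F * B)) hx.1 hx.2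
            (by linarith [hylow] : -((K + 1) * (F * m)) ≤ _) hyup hA1 hA2
          nlinarith
        · nlinarith
      have hCm : C * m = 3 * (2 * ((K + 1) * (F * B)) * m) := by rw [hCdef]; ring
      linarith
    have hLm : ε * (Real.exp (L * τ) * L) = C * m + m := by
      rw [hmdef, hLdef]; ring
    rw [hLm] at hd
    linarith
  -- nonnegativity
  have hnonneg : ∀ t ∈ Set.Icc (0:ℝ) T₁, ∀ k, k ≤ K → ∀ u : ℝ, 0 ≤ ρ t k u := by
    intro t ht k hk u
    by_contra hneg
    push_neg at hneg
    have hexppos : 0 < Real.exp (L * t) := Real.exp_pos _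
    have hε : 0 < -ρ t k u / (2 * Real.exp (L * t)) :=
      div_pos (by linarith) (by positivity)
    have hkey := key _ hε t ht k hk u
    have he : -ρ t k u / (2 * Real.exp (L * t)) * Real.exp (L * t) = -ρ t k u / 2 := by
      field_simp
    rw [he] at hkey
    linarith
  -- the sum is constant equal to 1
  have hsum : ∀ t ∈ Set.Icc (0:ℝ) T₁, ∀ u : ℝ,
      ∑ k ∈ Finset.range (K + 1), ρ t k u = 1 := by
    intro t ht u
    have hder0 : ∀ s ∈ Set.Icc (0:ℝ) T₁,
        HasDerivWithinAt (fun s => ∑ k ∈ Finset.range (K + 1), ρ s k u) 0 (Set.Icc 0 T₁) s := by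
      intro s hs
      have h1 : HasDerivWithinAt (fun s => ∑ k ∈ Finset.range (K + 1), ρ s k u)
          (∑ k ∈ Finset.range (K + 1), eqRHS K φ (ρ s) k u) (Set.Icc 0 T₁) s :=
        HasDerivWithinAt.fun_sum
          (fun k hk => hderiv s hs k (Nat.lt_succ_iff.mp (Finset.mem_range.mp hk)) u)
      rwa [sum_eqRHS_zero K φ (ρ s) φ0 φtop u] at h1
    have h0I : (0:ℝ) ∈ Set.Icc (0:ℝ) T₁ := ⟨le_refl _, hT₁.le⟩
    have hbd := Convex.norm_image_sub_le_of_norm_hasDerivWithin_le (C := 0)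
      (f' := fun _ => (0:ℝ)) hder0 (fun s _ => by simp) (convex_Icc (0:ℝ) T₁) h0I ht
    have hinit1 : ∑ k ∈ Finset.range (K + 1), ρ 0 k u = 1 := by
      have hc : ∀ k ∈ Finset.range (K + 1), ρ 0 k u
          = (K.choose k : ℝ) * (ψ u / K) ^ k * (1 - ψ u / K) ^ (K - k) :=
        fun k hk => init k (Nat.lt_succ_iff.mp (Finset.mem_range.mp hk)) u
      rw [Finset.sum_congr rfl hc]
      have hq : ∑ k ∈ Finset.range (K + 1),
          (K.choose k : ℝ) * (ψ u / K) ^ k * (1 - ψ u / K) ^ (K - k)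
          = ((ψ u / K) + (1 - ψ u / K)) ^ K := by
        rw [add_pow]
        exact Finset.sum_congr rfl fun k _ => by ring
      rw [hq, show (ψ u / K) + (1 - ψ u / K) = 1 by ring, one_pow]
    have : |∑ k ∈ Finset.range (K + 1), ρ t k u - ∑ k ∈ Finset.range (K + 1), ρ 0 k u| ≤ 0 := by
      simpa using hbd
    have h2 : ∑ k ∈ Finset.range (K + 1), ρ t k u = ∑ k ∈ Finset.range (K + 1), ρ 0 k u := by
      have h3 := abs_eq_zero.mp (le_antisymm this (abs_nonneg _))
      linarith
    rw [h2, hinit1]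
  -- conclusion
  intro t ht u
  refine ⟨fun k hk => ⟨hnonneg t ht k hk u, ?_⟩, hsum t ht u⟩
  have h1 := hsum t ht u
  have h2 : ρ t k u ≤ ∑ j ∈ Finset.range (K + 1), ρ t j u :=
    Finset.single_le_sum (f := fun j => ρ t j u)
      (fun j hj => hnonneg t ht j (Nat.lt_succ_iff.mp (Finset.mem_range.mp hj)) u)
      (Finset.mem_range.mpr (by omega))
  linarith
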